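/- arXiv:2310.18051 — 7 statements merged into one kernel-verified Lean document; each statement's English description precedes it below -/
import Mathlib

section
/- If P(x₁,...,xₙ) is real stable, then its partial derivative ∂P/∂x₁ is real stable or identically zero. -/
/-!
Fix `w` in the upper half-space `ℍⁿ`. The slice `y ↦ P(w₁, …, y, …, wₙ)` has all its roots in the
closed lower half-plane, so its logarithmic derivative `∑ 1 / (y - r)` at `y = wᵢ` has imaginary
part `≤ 0`, and `< 0` unless `∂ᵢP(w) = 0`. Hence `f = ∂ᵢP / P` is holomorphic on `ℍⁿ` with
`Im f ≤ 0`. If `∂ᵢP` vanishes at one point of `ℍⁿ`, then `Im f` attains its maximum `0` there, so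
`Im f ≡ 0` by the maximum modulus principle applied to `exp (-i f)`. By strictness `∂ᵢP` vanishes on
all of `ℍⁿ`, which forces `∂ᵢP = 0`.
-/

def RealStable {σ : Type*} (P : MvPolynomial σ ℝ) : Prop :=
  ∀ z : σ → ℂ, (∀ i, 0 < (z i).im) → MvPolynomial.aeval z P ≠ 0

open Polynomial

namespace Complex

theorem im_eqOn_of_isPreconnected_of_isMaxOn_im {E : Type*} [NormedAddCommGroup E]
    [NormedSpace ℂ E] {f : E → ℂ} {U : Set E} {c : E} (hc : IsPreconnected U) (ho : IsOpen U)
    (hd : DifferentiableOn ℂ f U) (hcU : c ∈ U) (hm : IsMaxOn (fun x => (f x).im) U c) :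
    ∀ x ∈ U, (f x).im = (f c).im := by
  have hnorm (x : E) : ‖exp (-I * f x)‖ = Real.exp (f x).im := by
    simp [norm_exp, mul_re]
  have hconst := eqOn_of_isPreconnected_of_isMaxOn_norm hc ho (hd.const_mul (-I)).cexp hcU
    fun x hx => by simpa only [Function.comp_apply, hnorm, Real.exp_le_exp] using hm hx
  intro x hx
  simpa only [Function.const_apply, hnorm, Real.exp_eq_exp] using congrArg norm (hconst hx)

end Complex

namespace Polynomial

theorem im_eval_derivative_div_eval_neg {q : ℂ[X]} (hq : ∀ x : ℂ, 0 < x.im → q.eval x ≠ 0)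
    {a : ℂ} (ha : 0 < a.im) (hq' : q.derivative.eval a ≠ 0) :
    (q.derivative.eval a / q.eval a).im < 0 := by
  have hroots : q.roots ≠ 0 := by
    refine (IsAlgClosed.splits q).roots_ne_zero fun hdeg => hq' ?_
    rw [derivative_of_natDegree_zero hdeg, eval_zero]
  have hterm : ∀ r ∈ q.roots, (1 / (a - r)).im < 0 := by
    intro r hr
    have hr_im : r.im ≤ 0 := not_lt.mp fun h => hq r h (isRoot_of_mem_roots hr)
    have hsub : 0 < (a - r).im := by rw [Complex.sub_im]; linarith
    rw [one_div, Complex.inv_im, neg_div]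
    exact neg_neg_of_pos (div_pos hsub (Complex.normSq_pos.mpr fun h => by simp [h] at hsub))
  rw [(IsAlgClosed.splits q).eval_derivative_div_eval_of_ne_zero (hq a ha),
    ← Complex.coe_imAddGroupHom, map_multiset_sum, Multiset.map_map]
  simpa using Multiset.sum_lt_sum_of_nonempty (g := fun _ => (0 : ℝ)) hroots hterm

end Polynomial

namespace MvPolynomial

variable {σ : Type*}

theorem eval_aeval {R : Type*} [CommSemiring R] [Algebra R ℂ] (g : σ → ℂ[X])
    (p : MvPolynomial σ R) (y : ℂ) :
    Polynomial.eval y (aeval g p) = aeval (fun j => Polynomial.eval y (g j)) p := by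
  simpa using comp_aeval_apply (f := g) ((Polynomial.aeval y).restrictScalars R) p

theorem eq_zero_of_forall_im_pos_aeval_eq_zero [Finite σ] (p : MvPolynomial σ ℝ)
    (h : ∀ w : σ → ℂ, (∀ i, 0 < (w i).im) → aeval w p = 0) : p = 0 := by
  set pℂ := map (algebraMap ℝ ℂ) p
  set S : Finset ℂ := (Finset.range (pℂ.totalDegree + 1)).image fun k : ℕ => (k : ℂ) + Complex.I
  have hS : S.card = pℂ.totalDegree + 1 := by
    refine (Finset.card_image_of_injective _ fun k l hkl => ?_).trans (Finset.card_range _)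
    simpa using congrArg Complex.re hkl
  have hpℂ : pℂ = 0 := by
    refine eq_zero_of_eval_zero_at_prod_finset pℂ (fun _ => S)
      (fun i => hS ▸ Nat.lt_succ_of_le (degreeOf_le_totalDegree pℂ i)) fun w hw => ?_
    rw [eval_map, ← aeval_def]
    refine h w fun i => ?_
    obtain ⟨k, -, hk⟩ := Finset.mem_image.mp (hw i)
    simp [← hk]
  exact map_injective _ (algebraMap ℝ ℂ).injective (hpℂ.trans (map_zero _).symm)

variable [DecidableEq σ] {R : Type*} [CommSemiring R] [Algebra R ℂ]

noncomputable def slice (w : σ → ℂ) (i : σ) (p : MvPolynomial σ R) : ℂ[X] :=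
  aeval (Function.update (fun j => Polynomial.C (w j)) i Polynomial.X) p

theorem eval_slice (w : σ → ℂ) (i : σ) (p : MvPolynomial σ R) (y : ℂ) :
    (slice w i p).eval y = aeval (Function.update w i y) p := by
  rw [slice, eval_aeval]
  congr 1
  ext j
  rcases eq_or_ne j i with rfl | hj <;> simp [*]

theorem derivative_slice (w : σ → ℂ) (i : σ) (p : MvPolynomial σ R) :
    derivative (slice w i p) = slice w i (pderiv i p) := by
  induction p using MvPolynomial.induction_on with
  | C a => simp [slice, Polynomial.algebraMap_apply]
  | add p q hp hq => simp_all [slice]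
  | mul_X p j hp =>
    rcases eq_or_ne j i with rfl | hj <;> simp_all [slice, derivative_mul, mul_comm]

end MvPolynomial

namespace RealStable

variable {σ : Type*} [DecidableEq σ] {P : MvPolynomial σ ℝ} {w : σ → ℂ}

open MvPolynomial

theorem im_aeval_pderiv_div_neg (hP : RealStable P) (hw : ∀ j, 0 < (w j).im) (i : σ)
    (hi : aeval w (pderiv i P) ≠ 0) : (aeval w (pderiv i P) / aeval w P).im < 0 := by
  have hslice : ∀ y : ℂ, 0 < y.im → (slice w i P).eval y ≠ 0 := fun y hy => by
    rw [eval_slice]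
    exact hP _ (Function.forall_update_iff _ (p := fun (_ : σ) (z : ℂ) => 0 < z.im) |>.mpr
      ⟨hy, fun j _ => hw j⟩)
  have key := im_eval_derivative_div_eval_neg hslice (hw i)
    (by rwa [derivative_slice, eval_slice, Function.update_eq_self])
  rwa [derivative_slice, eval_slice, eval_slice, Function.update_eq_self] at key

theorem im_aeval_pderiv_div_nonpos (hP : RealStable P) (hw : ∀ j, 0 < (w j).im) (i : σ) :
    (aeval w (pderiv i P) / aeval w P).im ≤ 0 := by
  by_cases hi : aeval w (pderiv i P) = 0
  · simp [hi]
  · exact (hP.im_aeval_pderiv_div_neg hw i hi).le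

theorem pderiv_eq_zero_of_aeval_pderiv_eq_zero [Fintype σ] (hP : RealStable P)
    (hw : ∀ j, 0 < (w j).im) (i : σ) (h0 : aeval w (pderiv i P) = 0) : pderiv i P = 0 := by
  let H : Set (σ → ℂ) := Set.univ.pi fun _ => {c : ℂ | 0 < c.im}
  have hmemH {u : σ → ℂ} : u ∈ H ↔ ∀ j, 0 < (u j).im := by simp [H]
  let f : (σ → ℂ) → ℂ := fun u => aeval u (pderiv i P) / aeval u P
  have hanalytic (Q : MvPolynomial σ ℝ) : AnalyticOnNhd ℂ (fun u : σ → ℂ => aeval u Q) H :=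
    AnalyticOnNhd.aeval_mvPolynomial (f := fun u => u)
      (fun j => (ContinuousLinearMap.proj (R := ℂ) (φ := fun _ : σ => ℂ) j).analyticOnNhd _) Q
  have hf : DifferentiableOn ℂ f H :=
    ((hanalytic _).div (hanalytic _) fun u hu => hP u (hmemH.mp hu)).differentiableOn
  have hmax : IsMaxOn (fun u => (f u).im) H w := fun u hu => by
    simpa [f, h0] using hP.im_aeval_pderiv_div_nonpos (hmemH.mp hu) i
  have him := Complex.im_eqOn_of_isPreconnected_of_isMaxOn_im
    (convex_pi fun _ _ => convex_halfSpace_im_gt 0).isPreconnected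
    (isOpen_set_pi Set.finite_univ fun _ _ => isOpen_lt continuous_const Complex.continuous_im)
    hf (hmemH.mpr hw) hmax
  refine eq_zero_of_forall_im_pos_aeval_eq_zero _ fun u hu => by_contra fun hne => ?_
  have hneg := hP.im_aeval_pderiv_div_neg hu i hne
  rw [show _ = (f w).im from him u (hmemH.mpr hu)] at hneg
  simp [f, h0] at hneg

end RealStable

/-- If `P` is real stable then `∂P/∂x₁` is real stable or identically zero. -/
theorem stmt_3 (n : ℕ) (P : MvPolynomial (Fin (n + 1)) ℝ) (hP : RealStable P) :
    MvPolynomial.pderiv 0 P = 0 ∨ RealStable (MvPolynomial.pderiv 0 P) :=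
  or_iff_not_imp_left.mpr fun hne _ hz h0 =>
    hne (hP.pderiv_eq_zero_of_aeval_pderiv_eq_zero hz 0 h0)
end

section
/- For t > 1, the bivariate polynomial x₂(t·x₁ + 1) + x₁ + 1 is not real stable: the substitution x₁ = i, x₂ = (−(t+1) + (t−1)i)/(t²+1) gives a zero, where x₂ has positive imaginary part. -/
open MvPolynomial Complex in
/-- For `t > 1` the polynomial `x₂(t·x₁ + 1) + x₁ + 1` is not real stable:
the substitution `x₁ = i`, `x₂ = (−(t+1) + (t−1)i)/(t²+1)` gives a zero,
and `x₂` has positive imaginary part. -/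
theorem stmt_5 (t : ℝ) (ht : 1 < t) :
    let P : MvPolynomial (Fin 2) ℝ := X 1 * (C t * X 0 + 1) + X 0 + 1
    let z : Fin 2 → ℂ := ![I, (-(t + 1) + (t - 1) * I) / (t ^ 2 + 1)]
    (∀ i, 0 < (z i).im) ∧ MvPolynomial.aeval z P = 0 ∧ ¬ RealStable P := by
  intro P z
  have ht2 : (0:ℝ) < t ^ 2 + 1 := by positivity
  have hne : ((t:ℂ) ^ 2 + 1) ≠ 0 := by
    have : ((t:ℂ) ^ 2 + 1) = ((t ^ 2 + 1 : ℝ) : ℂ) := by push_cast; ring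
    rw [this]
    exact_mod_cast ne_of_gt ht2
  have him : ∀ i, 0 < (z i).im := by
    intro i
    fin_cases i
    · simp [z]
    · show (0:ℝ) < ((-(t + 1) + (t - 1) * I) / ((t:ℂ) ^ 2 + 1)).im
      have : ((t:ℂ) ^ 2 + 1) = ((t ^ 2 + 1 : ℝ) : ℂ) := by push_cast; ring
      rw [this, Complex.div_ofReal_im]
      simp only [Complex.add_im, Complex.neg_im, Complex.mul_im, Complex.I_im, Complex.I_re,
        Complex.sub_im, Complex.sub_re, Complex.ofReal_im, Complex.ofReal_re, Complex.add_re,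
        Complex.one_im, Complex.one_re]
      have : 0 < t - 1 := by linarith
      positivity
  have heval : MvPolynomial.aeval z P = 0 := by
    simp only [P, map_add, map_mul, map_one, aeval_X, aeval_C, algebraMap_eq, z]
    show ((-(t + 1) + (t - 1) * I) / ((t:ℂ) ^ 2 + 1)) * ((t:ℂ) * I + 1) + I + 1 = 0
    field_simp
    ring_nf
    simp [Complex.I_sq]
  refine ⟨him, heval, fun h => h z him heval⟩
end

section
/- For a weighted 4-cycle on vertices v₁v₂v₃v₄ with edge weights w(v₁v₂)=w(v₂v₃)=w(v₃v₄)=1 and w(v₄v₁)=1/t with t > 0, the weighted vertex spanning-tree polynomial equals (1/t)(t·x₂x₃ + x₁x₂ + x₃x₄ + x₁x₄), and this polynomial is real stable if and only if t = 1. -/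
open scoped Classical in
/-- The weighted vertex spanning-tree polynomial
`P_{G,w} = Σ_{T spanning tree of G} (Π_{e∈T} w(e)) · Π_v x_v^{deg_T(v)−1}`. -/
noncomputable def treePoly {V : Type*} [Fintype V] [DecidableEq V]
    (G : SimpleGraph V) (w : Sym2 V → ℝ) : MvPolynomial V ℝ :=
  ∑ T ∈ Finset.univ.filter (fun T : SimpleGraph V => T ≤ G ∧ T.IsTree),
    MvPolynomial.C (∏ e ∈ T.edgeFinset, w e) *
      ∏ v, MvPolynomial.X v ^ (T.degree v - 1)

/-!
The spanning trees of the 4-cycle are the four paths obtained by deleting one edge; summing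
their contributions gives the formula. Up to the positive factor `1/t` the polynomial is
`(x₁ + x₃)(x₂ + x₄) + (t - 1) x₂x₃`. For `t = 1` it is a product of two sums of variables from
the upper half-plane, hence nonzero there. For `t ≠ 1`, fixing `x₁ = 1 + i` and `x₃ = i` leaves
a linear form `α x₂ + β x₄` with `β / α ∉ ℝ`, and such a form has a zero with both variables in
the upper half-plane.
-/

open Finset SimpleGraph MvPolynomial Complex

namespace SimpleGraph

variable {V : Type*}

lemma not_isDiag_of_subset_edgeFinset {G : SimpleGraph V} [Fintype G.edgeSet]
    {F : Finset (Sym2 V)} (hF : F ⊆ G.edgeFinset) : ∀ e ∈ F, ¬e.IsDiag :=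
  fun _ he => G.not_isDiag_of_mem_edgeSet (mem_edgeFinset.1 (hF he))

lemma edgeSet_fromEdgeSet_coe {F : Finset (Sym2 V)} (hF : ∀ e ∈ F, ¬e.IsDiag) :
    (fromEdgeSet (F : Set (Sym2 V))).edgeSet = F := by
  ext e
  simp only [edgeSet_fromEdgeSet, Set.mem_sdiff, mem_coe, Sym2.mem_diagSet]
  exact ⟨And.left, fun he => ⟨he, hF e he⟩⟩

-- The `Fintype` instances in the next two lemmas are implicit rather than instance-implicit, so
-- that the lemmas also rewrite under the classical instances used in `treePoly`.
lemma edgeFinset_fromEdgeSet_coe {F : Finset (Sym2 V)} (hF : ∀ e ∈ F, ¬e.IsDiag)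
    {_ : Fintype (fromEdgeSet (F : Set (Sym2 V))).edgeSet} :
    (fromEdgeSet (F : Set (Sym2 V))).edgeFinset = F :=
  Finset.coe_injective (by rw [coe_edgeFinset, edgeSet_fromEdgeSet_coe hF])

lemma degree_fromEdgeSet_coe [DecidableEq V] {F : Finset (Sym2 V)} (hF : ∀ e ∈ F, ¬e.IsDiag)
    (v : V) {_ : Fintype ((fromEdgeSet (F : Set (Sym2 V))).neighborSet v)} :
    (fromEdgeSet (F : Set (Sym2 V))).degree v = #{e ∈ F | v ∈ e} := by
  classical
  rw [← card_incidenceFinset_eq_degree, incidenceFinset_eq_filter, edgeFinset_fromEdgeSet_coe hF]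

lemma le_and_isTree_iff [Fintype V] {G T : SimpleGraph V} [Fintype G.edgeSet] :
    T ≤ G ∧ T.IsTree ↔ ∃ F ∈ G.edgeFinset.powersetCard (Fintype.card V - 1),
      (fromEdgeSet (F : Set (Sym2 V))).Connected ∧ fromEdgeSet (F : Set (Sym2 V)) = T := by
  classical
  constructor
  · rintro ⟨hle, hT⟩
    refine ⟨T.edgeFinset, mem_powersetCard.2 ⟨edgeFinset_mono hle, ?_⟩, ?_⟩
    · have := hT.card_edgeFinset
      omega
    · rw [coe_edgeFinset, fromEdgeSet_edgeSet]
      exact ⟨hT.connected, rfl⟩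
  · rintro ⟨F, hF, hconn, rfl⟩
    rw [mem_powersetCard] at hF
    refine ⟨(fromEdgeSet_le _).2 fun e he => mem_edgeFinset.1 (hF.1 he.1),
      isTree_iff_connected_and_card.2 ⟨hconn, ?_⟩⟩
    have := hconn.nonempty
    have := Fintype.card_pos (α := V)
    rw [Nat.card_eq_fintype_card, ← edgeFinset_card,
      edgeFinset_fromEdgeSet_coe (not_isDiag_of_subset_edgeFinset hF.1), hF.2,
      Nat.card_eq_fintype_card]
    omega

end SimpleGraph

open scoped Classical in
lemma treePoly_eq_sum_connected {V : Type*} [Fintype V] [DecidableEq V] (G : SimpleGraph V)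
    (w : Sym2 V → ℝ) :
    treePoly G w = ∑ F ∈ (G.edgeFinset.powersetCard (Fintype.card V - 1)).filter
        (fun F : Finset (Sym2 V) => (fromEdgeSet (F : Set (Sym2 V))).Connected),
      C (∏ e ∈ F, w e) * ∏ v, X v ^ (#{e ∈ F | v ∈ e} - 1) := by
  set spanning := (G.edgeFinset.powersetCard (Fintype.card V - 1)).filter
    (fun F : Finset (Sym2 V) => (fromEdgeSet (F : Set (Sym2 V))).Connected)
  have hdiag : ∀ F ∈ spanning, ∀ e ∈ F, ¬e.IsDiag := fun F hF =>
    not_isDiag_of_subset_edgeFinset (mem_powersetCard.1 (mem_filter.1 hF).1).1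
  have htrees : univ.filter (fun T : SimpleGraph V => T ≤ G ∧ T.IsTree) =
      spanning.image (fun F : Finset (Sym2 V) => fromEdgeSet (F : Set (Sym2 V))) := by
    ext T
    simp [spanning, le_and_isTree_iff, and_assoc]
  rw [treePoly, htrees, sum_image]
  · refine sum_congr rfl fun F hF => ?_
    simp only [edgeFinset_fromEdgeSet_coe (hdiag F hF), degree_fromEdgeSet_coe (hdiag F hF)]
  · intro F₁ hF₁ F₂ hF₂ h
    apply Finset.coe_injective
    calc (F₁ : Set (Sym2 V))
        = (fromEdgeSet (F₁ : Set (Sym2 V))).edgeSet := (edgeSet_fromEdgeSet_coe (hdiag F₁ hF₁)).symm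
      _ = (fromEdgeSet (F₂ : Set (Sym2 V))).edgeSet := congrArg edgeSet h
      _ = F₂ := edgeSet_fromEdgeSet_coe (hdiag F₂ hF₂)

abbrev fourCycleEdges : Finset (Sym2 (Fin 4)) := {s(0, 1), s(1, 2), s(2, 3), s(3, 0)}

set_option maxRecDepth 10000 in
lemma connected_of_mem_powersetCard_fourCycleEdges :
    ∀ F ∈ fourCycleEdges.powersetCard 3, (fromEdgeSet (F : Set (Sym2 (Fin 4)))).Connected := by
  decide

lemma treePoly_fourCycle {t : ℝ} (ht : t ≠ 0) :
    treePoly (fromEdgeSet ({s(0, 1), s(1, 2), s(2, 3), s(3, 0)} : Set (Sym2 (Fin 4))))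
        (fun e => if e = s(3, 0) then 1 / t else 1) =
      C (1 / t) * (C t * X 1 * X 2 + X 0 * X 1 + X 2 * X 3 + X 0 * X 3) := by
  rw [show ({s(0, 1), s(1, 2), s(2, 3), s(3, 0)} : Set (Sym2 (Fin 4))) = fourCycleEdges by simp,
    treePoly_eq_sum_connected, edgeFinset_fromEdgeSet_coe (by decide), Fintype.card_fin,
    filter_true_of_mem connected_of_mem_powersetCard_fourCycleEdges,
    show fourCycleEdges.powersetCard 3 = {{s(1, 2), s(2, 3), s(3, 0)}, {s(0, 1), s(2, 3), s(3, 0)},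
      {s(0, 1), s(1, 2), s(3, 0)}, {s(0, 1), s(1, 2), s(2, 3)}} by decide,
    sum_insert (by decide), sum_insert (by decide), sum_insert (by decide), sum_singleton]
  simp only [Fin.isValue, one_div, prod_ite_eq', mem_insert, Sym2.eq, Sym2.rel_iff',
    Prod.mk.injEq, Fin.reduceEq, and_self, Prod.swap_prod_mk, zero_ne_one, or_self, and_false,
    mem_singleton, or_true, ↓reduceIte, filter_insert, Sym2.mem_iff, filter_singleton,
    Fin.prod_univ_four, card_singleton, tsub_self, pow_zero, or_false, one_ne_zero,
    insert_empty_eq, mul_one, and_true, not_false_eq_true, card_insert_of_notMem,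
    Nat.reduceAdd, Nat.add_one_sub_one, pow_one, one_mul, C_1]
  have hCt : (C t⁻¹ * C t : MvPolynomial (Fin 4) ℝ) = 1 := by
    rw [← C_mul, inv_mul_cancel₀ ht, C_1]
  linear_combination (-(X 1 * X 2)) * hCt

lemma realStable_C_mul_iff {σ : Type*} {a : ℝ} (ha : a ≠ 0) {P : MvPolynomial σ ℝ} :
    RealStable (C a * P) ↔ RealStable P := by
  simp [RealStable, ha]

lemma Complex.exists_im_pos_mul_im_pos {u : ℂ} (hu : u.im ≠ 0) :
    ∃ c : ℂ, 0 < c.im ∧ 0 < (u * c).im := by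
  refine ⟨((1 - u.re) / u.im : ℝ) + I, by simp, ?_⟩
  have : (u * (((1 - u.re) / u.im : ℝ) + I)).im = 1 := by
    simp only [mul_im, add_re, ofReal_re, I_re, add_zero, add_im, ofReal_im, I_im, zero_add,
      mul_one]
    field_simp
    ring
  rw [this]
  exact one_pos

lemma Complex.exists_im_pos_mul_add_mul_eq_zero {α β : ℂ} (hα : α ≠ 0) (h : (β / α).im ≠ 0) :
    ∃ z w : ℂ, 0 < z.im ∧ 0 < w.im ∧ α * z + β * w = 0 := by
  obtain ⟨c, hc, hu⟩ := exists_im_pos_mul_im_pos (u := -(β / α)) (by simpa using h)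
  refine ⟨-(β / α) * c, c, hu, hc, ?_⟩
  field_simp
  ring

lemma realStable_fourCycle_iff (t : ℝ) :
    RealStable (C t * X 1 * X 2 + X 0 * X 1 + X 2 * X 3 + X 0 * X 3 : MvPolynomial (Fin 4) ℝ) ↔
      t = 1 := by
  constructor
  · intro hstable
    by_contra ht
    have hα : (t * I + (1 + I) : ℂ) ≠ 0 := fun h => by simpa using congrArg re h
    have hratio : ((I + (1 + I)) / (t * I + (1 + I))).im ≠ 0 := by
      rw [div_im, ← sub_div]
      refine div_ne_zero ?_ (normSq_pos.2 hα).ne'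
      simpa [sub_eq_zero] using Ne.symm ht
    obtain ⟨z, w, hz, hw, hzero⟩ := exists_im_pos_mul_add_mul_eq_zero hα hratio
    refine hstable ![1 + I, z, I, w] (fun i => ?_) ?_
    · fin_cases i <;> simp [hz, hw]
    · simp only [Fin.isValue, map_add, map_mul, algHom_C, coe_algebraMap, aeval_X,
        Matrix.cons_val_one, Matrix.cons_val_zero, Matrix.cons_val]
      linear_combination hzero
  · rintro rfl z hz
    have hfactor : aeval z (C 1 * X 1 * X 2 + X 0 * X 1 + X 2 * X 3 + X 0 * X 3 :
        MvPolynomial (Fin 4) ℝ) = (z 0 + z 2) * (z 1 + z 3) := by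
      simp only [map_add, map_mul, aeval_X, map_one]
      ring
    have hsum (i j : Fin 4) : z i + z j ≠ 0 := fun h => by
      have := congrArg im h
      simp only [add_im, zero_im] at this
      linarith [hz i, hz j]
    rw [hfactor]
    exact mul_ne_zero (hsum 0 2) (hsum 1 3)

open MvPolynomial in
/-- For the weighted 4-cycle `v₁v₂v₃v₄` (vertices `0,1,2,3`) with edge weights
`w(v₁v₂)=w(v₂v₃)=w(v₃v₄)=1` and `w(v₄v₁)=1/t`, `t > 0`, the weighted vertex
spanning-tree polynomial equals `(1/t)(t·x₂x₃ + x₁x₂ + x₃x₄ + x₁x₄)`, and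
it is real stable if and only if `t = 1`. -/
theorem stmt_6 (t : ℝ) (ht : 0 < t) :
    let G : SimpleGraph (Fin 4) :=
      SimpleGraph.fromEdgeSet {s(0, 1), s(1, 2), s(2, 3), s(3, 0)}
    let w : Sym2 (Fin 4) → ℝ := fun e => if e = s(3, 0) then 1 / t else 1
    treePoly G w =
        C (1 / t) * (C t * X 1 * X 2 + X 0 * X 1 + X 2 * X 3 + X 0 * X 3) ∧
      (RealStable (treePoly G w) ↔ t = 1) := by
  intro G w
  have htree : treePoly G w = _ := treePoly_fourCycle ht.ne'
  refine ⟨htree, ?_⟩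
  rw [htree, realStable_C_mul_iff (by positivity), realStable_fourCycle_iff]
end

section
/- If the weighted vertex spanning-tree polynomial of K₄ with edge weights w(i4)=1 (i=1,2,3) and opposite-edge weights e₁,e₂,e₃ > 0 is real stable, then at least two of e₁, e₂, e₃ are equal. -/
open SimpleGraph Finset MvPolynomial

namespace SimpleGraph

variable {V : Type*} [Fintype V] (G : SimpleGraph V) [DecidableRel G.Adj]

theorem edgeFinset_fromEdgeSet_of_subset {s : Finset (Sym2 V)}
    [Fintype (fromEdgeSet (s : Set (Sym2 V))).edgeSet] (hs : s ⊆ G.edgeFinset) :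
    (fromEdgeSet (s : Set (Sym2 V))).edgeFinset = s := by
  ext e
  simp only [mem_edgeFinset, edgeSet_fromEdgeSet, Set.mem_sdiff, mem_coe, and_iff_left_iff_imp]
  exact fun he => G.not_isDiag_of_mem_edgeSet (mem_edgeFinset.mp (hs he))

theorem isTree_fromEdgeSet_iff {s : Finset (Sym2 V)} (hs : s ⊆ G.edgeFinset) :
    (fromEdgeSet (s : Set (Sym2 V))).IsTree ↔
      (fromEdgeSet (s : Set (Sym2 V))).Connected ∧ #s + 1 = Fintype.card V := by
  classical
  rw [isTree_iff_connected_and_card, Nat.card_eq_fintype_card, Nat.card_eq_fintype_card,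
    ← edgeFinset_card, G.edgeFinset_fromEdgeSet_of_subset hs]

end SimpleGraph

theorem treePoly_eq_sum_edgeFinset {V : Type*} [Fintype V] [DecidableEq V]
    (G : SimpleGraph V) [DecidableRel G.Adj] (w : Sym2 V → ℝ) :
    treePoly G w =
      ∑ s ∈ G.edgeFinset.powerset with
        (fromEdgeSet ((s : Finset (Sym2 V)) : Set (Sym2 V))).Connected ∧ #s + 1 = Fintype.card V,
        C (∏ e ∈ s, w e) * ∏ v, X v ^ (#{e ∈ s | v ∈ e} - 1) := by
  classical
  rw [treePoly]
  refine sum_nbij' (fun T => T.edgeFinset) (fun s => fromEdgeSet (s : Set (Sym2 V)))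
    ?_ ?_ ?_ ?_ ?_
  · intro T hT
    simp only [mem_filter, mem_univ, true_and, mem_powerset] at hT ⊢
    have hsub := edgeFinset_mono hT.1
    rw [← G.isTree_fromEdgeSet_iff hsub, coe_edgeFinset, fromEdgeSet_edgeSet]
    exact ⟨hsub, hT.2⟩
  · intro s hs
    simp only [mem_filter, mem_univ, true_and, mem_powerset] at hs ⊢
    refine ⟨(fromEdgeSet_le G).mpr fun e he => ?_, (G.isTree_fromEdgeSet_iff hs.1).mpr hs.2⟩
    exact mem_edgeFinset.mp (hs.1 (mem_coe.mp he.1))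
  · intro T _
    simp only [coe_edgeFinset, fromEdgeSet_edgeSet]
  · intro s hs
    convert G.edgeFinset_fromEdgeSet_of_subset (mem_powerset.mp (mem_filter.mp hs).1)
  · intro T _
    simp only [← card_incidenceFinset_eq_degree, incidenceFinset_eq_filter]

def spanningTreesK4 : Finset (Finset (Sym2 (Fin 4))) :=
  { {s(0,1), s(0,2), s(0,3)}, {s(0,1), s(1,2), s(1,3)}, {s(0,2), s(1,2), s(2,3)},
    {s(0,3), s(1,3), s(2,3)}, {s(0,1), s(0,2), s(1,3)}, {s(0,1), s(0,2), s(2,3)},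
    {s(0,1), s(0,3), s(1,2)}, {s(0,1), s(0,3), s(2,3)}, {s(0,1), s(1,3), s(2,3)},
    {s(0,1), s(1,2), s(2,3)}, {s(0,2), s(0,3), s(1,2)}, {s(0,2), s(0,3), s(1,3)},
    {s(0,2), s(1,3), s(2,3)}, {s(0,2), s(1,2), s(1,3)}, {s(0,3), s(1,2), s(1,3)},
    {s(0,3), s(1,2), s(2,3)} }

theorem filter_connected_top_fin4_eq_spanningTreesK4 :
    {s ∈ (⊤ : SimpleGraph (Fin 4)).edgeFinset.powerset |
      (fromEdgeSet ((s : Finset (Sym2 (Fin 4))) : Set (Sym2 (Fin 4)))).Connected ∧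
        #s + 1 = Fintype.card (Fin 4)} = spanningTreesK4 := by
  decide

noncomputable def k4Form (e₁ e₂ e₃ : ℝ) : MvPolynomial (Fin 4) ℝ :=
  X 3 ^ 2 + X 3 * (X 0 * C (e₂ + e₃) + X 1 * C (e₁ + e₃) + X 2 * C (e₁ + e₂)) +
    (X 0 + X 1 + X 2) * (X 0 * C (e₂ * e₃) + X 1 * C (e₁ * e₃) + X 2 * C (e₁ * e₂))

theorem treePoly_top_fin4 (e₁ e₂ e₃ : ℝ) :
    treePoly (⊤ : SimpleGraph (Fin 4))
      (fun e => if e = s(1, 2) then e₁ else if e = s(0, 2) then e₂ else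
        if e = s(0, 1) then e₃ else 1) = k4Form e₁ e₂ e₃ := by
  rw [treePoly_eq_sum_edgeFinset, filter_connected_top_fin4_eq_spanningTreesK4]
  simp (disch := decide) only [spanningTreesK4, sum_insert, sum_singleton, prod_insert,
    prod_singleton, if_pos, if_neg, Fin.prod_univ_four, filter_insert, filter_singleton,
    Sym2.mem_iff, insert_empty, card_insert_of_notMem, card_singleton]
  simp only [k4Form, map_add, map_mul, map_one, mul_one]
  ring

theorem RealStable.rename {σ τ : Type*} {P : MvPolynomial σ ℝ} (hP : RealStable P)
    (f : σ → τ) : RealStable (MvPolynomial.rename f P) := fun z hz => by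
  rw [aeval_rename]
  exact hP (z ∘ f) fun i => hz (f i)

theorem rename_swap_zero_one_k4Form (e₁ e₂ e₃ : ℝ) :
    rename (Equiv.swap 0 1) (k4Form e₁ e₂ e₃) = k4Form e₂ e₁ e₃ := by
  simp (disch := decide) only [k4Form, map_add, map_mul, map_pow, rename_X, rename_C,
    Equiv.swap_apply_left, Equiv.swap_apply_right, Equiv.swap_apply_of_ne_of_ne]
  ring

theorem rename_swap_zero_two_k4Form (e₁ e₂ e₃ : ℝ) :
    rename (Equiv.swap 0 2) (k4Form e₁ e₂ e₃) = k4Form e₃ e₂ e₁ := by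
  simp (disch := decide) only [k4Form, map_add, map_mul, map_pow, rename_X, rename_C,
    Equiv.swap_apply_left, Equiv.swap_apply_right, Equiv.swap_apply_of_ne_of_ne]
  ring

theorem pos_mul_sub_of_pairwise_ne {a b c : ℝ} (hab : a ≠ b) (hbc : b ≠ c) (hac : a ≠ c) :
    0 < (a - b) * (c - a) ∨ 0 < (b - a) * (c - b) ∨ 0 < (c - b) * (a - c) := by
  rcases hab.lt_or_gt with hab | hab <;> rcases hbc.lt_or_gt with hbc | hbc <;>
    rcases hac.lt_or_gt with hac | hac <;>
    first
      | exact Or.inl (by nlinarith)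
      | exact Or.inr (Or.inl (by nlinarith))
      | exact Or.inr (Or.inr (by nlinarith))

theorem exists_quadratic_root_im_pos {a b c : ℝ} (ha : 0 < a) (hd : discrim a b c < 0) :
    ∃ t : ℂ, 0 < t.im ∧ a * (t * t) + b * t + c = 0 := by
  set s := Real.sqrt (-discrim a b c)
  have hs : 0 < s := Real.sqrt_pos.mpr (neg_pos.mpr hd)
  have hdiscrim : discrim (a : ℂ) b c = (s * Complex.I) * (s * Complex.I) := by
    have hsq : s * s = -discrim a b c := Real.mul_self_sqrt (neg_nonneg.mpr hd.le)
    rw [mul_mul_mul_comm, Complex.I_mul_I, ← Complex.ofReal_mul, hsq]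
    simp [discrim]
  refine ⟨(-b + s * Complex.I) / (2 * a), ?_, ?_⟩
  · rw [show (2 * a : ℂ) = ((2 * a : ℝ) : ℂ) by push_cast; rfl, Complex.div_ofReal_im]
    simpa using div_pos hs (by positivity : (0 : ℝ) < 2 * a)
  · exact (quadratic_eq_zero_iff (by exact_mod_cast ha.ne') hdiscrim _).mpr (Or.inl rfl)

theorem not_realStable_k4Form {e₁ e₂ e₃ : ℝ} (h₁ : 0 < e₁) (h₂ : 0 < e₂) (h₃ : 0 < e₃)
    (hmid : 0 < (e₁ - e₂) * (e₃ - e₁)) : ¬ RealStable (k4Form e₁ e₂ e₃) := by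
  set δ := (e₁ - e₂) * (e₃ - e₁)
  set α := 1 + 2 * (e₁ + e₂ + e₃) + 3 * (e₁ * e₂ + e₁ * e₃ + e₂ * e₃)
  have hδα : δ < α := by nlinarith [mul_pos h₂ h₃, mul_pos h₁ h₂, mul_pos h₁ h₃]
  obtain ⟨t, ht, hroot⟩ := exists_quadratic_root_im_pos (a := α) (b := 2 * δ) (c := δ)
    (by linarith) (by rw [discrim]; nlinarith)
  intro hP
  apply hP ![t - 1, t + 1, t + 1, t - e₁]
  · intro i
    fin_cases i <;> simpa
  · push_cast [δ, α] at hroot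
    simp only [k4Form, map_add, map_mul, map_pow, aeval_X, aeval_C, Complex.coe_algebraMap,
      Matrix.cons_val, Matrix.cons_val_zero, Matrix.cons_val_one]
    linear_combination hroot

/-- If the weighted vertex spanning-tree polynomial of `K₄` (vertices
`{0,1,2,3}`, vertex `3` playing the role of vertex 4) with weights
`w(i,3)=1` and opposite-edge weights `e₁ = w(1,2)`, `e₂ = w(0,2)`,
`e₃ = w(0,1)`, all positive, is real stable, then at least two of
`e₁, e₂, e₃` are equal. -/
theorem stmt_10 (e₁ e₂ e₃ : ℝ) (h₁ : 0 < e₁) (h₂ : 0 < e₂) (h₃ : 0 < e₃)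
    (hstab : RealStable (treePoly (⊤ : SimpleGraph (Fin 4))
      (fun e => if e = s(1, 2) then e₁ else if e = s(0, 2) then e₂ else
        if e = s(0, 1) then e₃ else 1))) :
    e₁ = e₂ ∨ e₂ = e₃ ∨ e₁ = e₃ := by
  by_contra! ⟨h12, h23, h13⟩
  rw [treePoly_top_fin4] at hstab
  rcases pos_mul_sub_of_pairwise_ne h12 h23 h13 with hmid | hmid | hmid
  · exact not_realStable_k4Form h₁ h₂ h₃ hmid hstab
  · apply not_realStable_k4Form h₂ h₁ h₃ hmid
    simpa only [rename_swap_zero_one_k4Form] using hstab.rename (Equiv.swap 0 1)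
  · apply not_realStable_k4Form h₃ h₂ h₁ hmid
    simpa only [rename_swap_zero_two_k4Form] using hstab.rename (Equiv.swap 0 2)
end

section
/- Let G be a weighted connected graph with a cut vertex v, such that deleting v leaves components with vertex sets V₁,...,V_k, and let G_i be the subgraph induced on V_i ∪ {v}. Then the weighted vertex spanning-tree polynomial of G factorizes: P_{G,w} = x_v^{k−1} · Π_{i=1}^k P_{G_i,w}, where each P_{G_i,w} uses the variables of the vertices of G_i. -/
/-!
A spanning tree `T` of `G` has no edge between different components of `G - v`, so it is the
union of its restrictions `Tᵢ` to the petals `Vᵢ ∪ {v}`, and each `Tᵢ` is a spanning tree of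
`Gᵢ`; conversely, spanning trees of the `Gᵢ` glue at `v` to a spanning tree of `G`. Along this
bijection the edge weights multiply, every vertex `u ≠ v` keeps its degree, and
`deg_T v = Σᵢ deg_{Tᵢ} v` with every `deg_{Tᵢ} v ≥ 1` (as `Vᵢ ≠ ∅`), whence
`x_v ^ (deg_T v - 1) = x_v ^ (k - 1) * Πᵢ x_v ^ (deg_{Tᵢ} v - 1)`.
-/

section

open Function Finset MvPolynomial

variable {V ι : Type*} {v : V} {Vs : ι → Set V}

structure IsPartitionCompl (Vs : ι → Set V) (v : V) : Prop where
  pairwise_disjoint : Pairwise (Disjoint on Vs)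
  iUnion_eq : ⋃ i, Vs i = {v}ᶜ

namespace IsPartitionCompl

lemma notMem (hP : IsPartitionCompl Vs v) (i : ι) : v ∉ Vs i := fun hv => by
  simpa [hP.iUnion_eq] using Set.mem_iUnion_of_mem i hv

lemma ne_of_mem (hP : IsPartitionCompl Vs v) {x : V} {i : ι} (hx : x ∈ Vs i) : x ≠ v := by
  rintro rfl
  exact hP.notMem i hx

lemma exists_mem (hP : IsPartitionCompl Vs v) {x : V} (hx : x ≠ v) : ∃ i, x ∈ Vs i :=
  Set.mem_iUnion.1 (hP.iUnion_eq ▸ hx)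

lemma eq_of_mem (hP : IsPartitionCompl Vs v) {x : V} {i j : ι} (hi : x ∈ Vs i)
    (hj : x ∈ Vs j) : i = j :=
  hP.pairwise_disjoint.eq (Set.not_disjoint_iff.2 ⟨x, hi, hj⟩)

lemma eq_of_mem_union_singleton (hP : IsPartitionCompl Vs v) {x : V} {i j : ι} (hij : i ≠ j)
    (hi : x ∈ Vs i ∪ {v}) (hj : x ∈ Vs j ∪ {v}) : x = v := by
  rcases hi with hi | rfl
  · rcases hj with hj | rfl
    · exact absurd (hP.eq_of_mem hi hj) hij
    · rfl
  · rfl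

end IsPartitionCompl

namespace SimpleGraph

def NoCrossEdges (H : SimpleGraph V) (Vs : ι → Set V) : Prop :=
  ∀ i j, i ≠ j → ∀ a ∈ Vs i, ∀ b ∈ Vs j, ¬ H.Adj a b

variable {H : SimpleGraph V}

namespace NoCrossEdges

lemma anti {H' : SimpleGraph V} (hle : H' ≤ H) (hH : H.NoCrossEdges Vs) : H'.NoCrossEdges Vs :=
  fun i j hij a ha b hb hab => hH i j hij a ha b hb (hle hab)

lemma mem_of_adj (hP : IsPartitionCompl Vs v) (hH : H.NoCrossEdges Vs) {a b : V} {i : ι}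
    (hab : H.Adj a b) (ha : a ∈ Vs i) : b ∈ Vs i ∪ {v} := by
  by_cases hb : b = v
  · exact Set.mem_union_right _ hb
  obtain ⟨j, hbj⟩ := hP.exists_mem hb
  obtain rfl : i = j := by_contra fun hij => hH i j hij a ha b hbj hab
  exact Set.mem_union_left _ hbj

lemma exists_mem_of_adj (hP : IsPartitionCompl Vs v) (hH : H.NoCrossEdges Vs) {a b : V}
    (hab : H.Adj a b) : ∃ i, a ∈ Vs i ∪ {v} ∧ b ∈ Vs i ∪ {v} := by
  by_cases ha : a = v
  · obtain ⟨i, hbi⟩ := hP.exists_mem (ha ▸ H.ne_of_adj hab).symm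
    exact ⟨i, Set.mem_union_right _ ha, Set.mem_union_left _ hbi⟩
  · obtain ⟨i, hai⟩ := hP.exists_mem ha
    exact ⟨i, Set.mem_union_left _ hai, hH.mem_of_adj hP hab hai⟩

/-- Walking from a vertex of `Vs i`, one stays inside `Vs i` until the first visit of `v`. -/
lemma reachable_induce_or (hP : IsPartitionCompl Vs v) (hH : H.NoCrossEdges Vs) {x y : V}
    {i : ι} (p : H.Walk x y) (hx : x ∈ Vs i) :
    (H.induce (Vs i ∪ {v})).Reachable ⟨x, Set.mem_union_left _ hx⟩ ⟨v, by simp⟩ ∨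
      ∃ hy : y ∈ Vs i, (H.induce (Vs i ∪ {v})).Reachable ⟨x, Set.mem_union_left _ hx⟩
        ⟨y, Set.mem_union_left _ hy⟩ := by
  induction p with
  | nil => exact .inr ⟨hx, .rfl⟩
  | @cons x z y hxz q ih =>
    rcases hH.mem_of_adj hP hxz hx with hz | rfl
    · have hxz' : (H.induce (Vs i ∪ {v})).Adj ⟨x, Set.mem_union_left _ hx⟩
          ⟨z, Set.mem_union_left _ hz⟩ := hxz
      rcases ih hz with h | ⟨hy, h⟩
      · exact .inl (hxz'.reachable.trans h)
      · exact .inr ⟨hy, hxz'.reachable.trans h⟩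
    · exact .inl (Adj.reachable hxz)

lemma reachable_induce (hP : IsPartitionCompl Vs v) (hH : H.NoCrossEdges Vs) {a b : V} {i : ι}
    (ha : a ∈ Vs i ∪ {v}) (hb : b ∈ Vs i ∪ {v}) (hab : H.Reachable a b) :
    (H.induce (Vs i ∪ {v})).Reachable ⟨a, ha⟩ ⟨b, hb⟩ := by
  have from_part : ∀ {x y : V} (hx : x ∈ Vs i) (hy : y ∈ Vs i ∪ {v}), H.Reachable x y →
      (H.induce (Vs i ∪ {v})).Reachable ⟨x, Set.mem_union_left _ hx⟩ ⟨y, hy⟩ := by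
    intro x y hx hy ⟨p⟩
    rcases hy with hy | rfl
    · rcases hH.reachable_induce_or hP p hx with hxv | ⟨_, h⟩
      · rcases hH.reachable_induce_or hP p.reverse hy with hyv | ⟨_, h⟩
        · exact hxv.trans hyv.symm
        · exact h.symm
      · exact h
    · rcases hH.reachable_induce_or hP p hx with h | ⟨hv, -⟩
      · exact h
      · exact absurd hv (hP.notMem i)
  rcases ha with ha | rfl
  · exact from_part ha hb hab
  · rcases hb with hb | rfl
    · exact (from_part hb _ hab.symm).symm
    · rfl

lemma isTree_iff (hP : IsPartitionCompl Vs v) (hH : H.NoCrossEdges Vs) :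
    H.IsTree ↔ ∀ i, (H.induce (Vs i ∪ {v})).IsTree := by
  refine ⟨fun hT i => ⟨?_, hT.isAcyclic.induce _⟩, fun hT => ⟨?_, ?_⟩⟩
  · exact (connected_iff_exists_forall_reachable _).2 ⟨⟨v, by simp⟩, fun ⟨x, hx⟩ =>
      hH.reachable_induce hP _ _ (hT.connected.preconnected v x)⟩
  · refine (connected_iff_exists_forall_reachable _).2 ⟨v, fun x => ?_⟩
    by_cases hx : x = v
    · exact hx ▸ .rfl
    obtain ⟨i, hxi⟩ := hP.exists_mem hx
    exact ((hT i).connected.preconnected ⟨v, by simp⟩ ⟨x, Set.mem_union_left _ hxi⟩).map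
      (Embedding.induce _).toHom
  · refine isAcyclic_iff_forall_adj_isBridge.2 fun a b hab => ?_
    obtain ⟨i, ha, hb⟩ := hH.exists_mem_of_adj hP hab
    have hbridge := isAcyclic_iff_forall_adj_isBridge.1 (hT i).isAcyclic
      (show (H.induce (Vs i ∪ {v})).Adj ⟨a, ha⟩ ⟨b, hb⟩ from hab)
    refine fun hreach => hbridge
      (((hH.anti (deleteEdges_le _)).reachable_induce hP ha hb hreach).mono ?_)
    rintro ⟨x, hx⟩ ⟨y, hy⟩ hxy
    simp only [comap_adj, deleteEdges_adj, Set.mem_singleton_iff] at hxy ⊢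
    refine ⟨hxy.1, fun he => hxy.2 ?_⟩
    simpa using congrArg (Sym2.map Subtype.val) he

end NoCrossEdges

def glue (v : V) (Vs : ι → Set V) (g : ∀ i, SimpleGraph ↥(Vs i ∪ {v})) :
    SimpleGraph V where
  Adj a b := ∃ i, ∃ (ha : a ∈ Vs i ∪ {v}) (hb : b ∈ Vs i ∪ {v}),
    (g i).Adj ⟨a, ha⟩ ⟨b, hb⟩
  symm := ⟨fun _ _ ⟨i, ha, hb, h⟩ => ⟨i, hb, ha, h.symm⟩⟩
  loopless := ⟨fun _ ⟨_, _, _, h⟩ => h.ne rfl⟩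

variable {g : ∀ i, SimpleGraph ↥(Vs i ∪ {v})}

lemma glue_adj {a b : V} : (glue v Vs g).Adj a b ↔
    ∃ i, ∃ (ha : a ∈ Vs i ∪ {v}) (hb : b ∈ Vs i ∪ {v}),
      (g i).Adj ⟨a, ha⟩ ⟨b, hb⟩ :=
  .rfl

lemma glue_induce (hP : IsPartitionCompl Vs v) (i : ι) :
    (glue v Vs g).induce (Vs i ∪ {v}) = g i := by
  ext ⟨x, hx⟩ ⟨y, hy⟩
  simp only [comap_adj, Embedding.subtype_apply, glue_adj]
  refine ⟨fun ⟨j, hxj, hyj, h⟩ => ?_, fun h => ⟨i, hx, hy, h⟩⟩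
  obtain rfl | hij := eq_or_ne j i
  · exact h
  · obtain rfl := hP.eq_of_mem_union_singleton hij hxj hx
    obtain rfl := hP.eq_of_mem_union_singleton hij hyj hy
    exact absurd rfl h.ne

lemma NoCrossEdges.glue_induce_eq (hP : IsPartitionCompl Vs v) (hH : H.NoCrossEdges Vs) :
    glue v Vs (fun i => H.induce (Vs i ∪ {v})) = H := by
  ext a b
  refine ⟨fun ⟨_, _, _, h⟩ => h, fun h => ?_⟩
  obtain ⟨i, ha, hb⟩ := hH.exists_mem_of_adj hP h
  exact ⟨i, ha, hb, h⟩

lemma noCrossEdges_glue (hP : IsPartitionCompl Vs v) : (glue v Vs g).NoCrossEdges Vs := by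
  rintro i j hij a ha b hb ⟨l, hal, hbl, -⟩
  obtain rfl := hP.eq_of_mem ha (hal.resolve_right (hP.ne_of_mem ha))
  obtain rfl := hP.eq_of_mem hb (hbl.resolve_right (hP.ne_of_mem hb))
  exact hij rfl

lemma glue_le {G : SimpleGraph V} (hle : ∀ i, g i ≤ G.induce (Vs i ∪ {v})) :
    glue v Vs g ≤ G :=
  fun _ _ ⟨i, _, _, h⟩ => hle i h

section Counting

open scoped Classical

variable [Fintype V] [DecidableEq V]

lemma NoCrossEdges.degree_induce_of_mem (hP : IsPartitionCompl Vs v) (hH : H.NoCrossEdges Vs)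
    {x : V} {i : ι} (hx : x ∈ Vs i) :
    (H.induce (Vs i ∪ {v})).degree ⟨x, Set.mem_union_left _ hx⟩ = H.degree x := by
  convert degree_induce_of_neighborSet_subset (G := H) (v := ⟨x, Set.mem_union_left _ hx⟩)
    fun _ hb => hH.mem_of_adj hP hb hx

lemma NoCrossEdges.degree_eq_sum [Fintype ι] (hP : IsPartitionCompl Vs v)
    (hH : H.NoCrossEdges Vs) :
    H.degree v = ∑ i, (H.induce (Vs i ∪ {v})).degree ⟨v, by simp⟩ := by
  have hsplit : H.neighborFinset v =
      univ.biUnion fun i => H.neighborFinset v ∩ (Vs i ∪ {v}).toFinset := by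
    ext b
    simp only [mem_biUnion, mem_univ, true_and, mem_inter, Set.mem_toFinset, exists_and_left,
      iff_self_and, mem_neighborFinset]
    intro hb
    obtain ⟨i, -, hbi⟩ := hH.exists_mem_of_adj hP hb
    exact ⟨i, hbi⟩
  rw [← card_neighborFinset_eq_degree, hsplit, card_biUnion]
  · refine sum_congr rfl fun i _ => ?_
    rw [← card_neighborFinset_eq_degree, ← card_map (Embedding.subtype _)]
    convert (congrArg card
      (map_neighborFinset_induce (G := H) (s := Vs i ∪ {v}) ⟨v, by simp⟩)).symm
  · intro i _ j _ hij
    simp only [Function.onFun]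
    refine Finset.disjoint_left.2 fun b hbi hbj => ?_
    simp only [mem_inter, mem_neighborFinset, Set.mem_toFinset] at hbi hbj
    exact hbi.1.ne (hP.eq_of_mem_union_singleton hij hbi.2 hbj.2).symm

lemma NoCrossEdges.prod_edgeFinset [Fintype ι] {M : Type*} [CommMonoid M]
    (hP : IsPartitionCompl Vs v) (hH : H.NoCrossEdges Vs) (f : Sym2 V → M) :
    ∏ e ∈ H.edgeFinset, f e =
      ∏ i, ∏ e ∈ (H.induce (Vs i ∪ {v})).edgeFinset, f (e.map Subtype.val) := by
  have hmap : ∀ i,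
      (H.induce (Vs i ∪ {v})).edgeFinset.map (Embedding.subtype _).sym2Map =
        H.edgeFinset ∩ (Vs i ∪ {v}).toFinset.sym2 := fun i => by
    convert map_edgeFinset_induce (G := H) (s := Vs i ∪ {v})
  have hsplit : H.edgeFinset = univ.biUnion fun i =>
      (H.induce (Vs i ∪ {v})).edgeFinset.map (Embedding.subtype _).sym2Map := by
    simp only [hmap]
    ext e
    induction e using Sym2.ind with
    | _ a b =>
      simp only [mem_biUnion, mem_univ, true_and, mem_inter, mem_edgeFinset, mem_edgeSet,
        mk_mem_sym2_iff, Set.mem_toFinset, exists_and_left, iff_self_and]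
      exact hH.exists_mem_of_adj hP
  rw [hsplit, prod_biUnion]
  · simp
  · intro i _ j _ hij
    simp only [Function.onFun, hmap]
    refine Finset.disjoint_left.2 fun e hei hej => ?_
    induction e using Sym2.ind with
    | _ a b =>
      simp only [mem_inter, mem_edgeFinset, mem_edgeSet, mk_mem_sym2_iff, Set.mem_toFinset]
        at hei hej
      exact hei.1.ne ((hP.eq_of_mem_union_singleton hij hei.2.1 hej.2.1).trans
        (hP.eq_of_mem_union_singleton hij hei.2.2 hej.2.2).symm)

end Counting

end SimpleGraph

open SimpleGraph

lemma rename_val_prod_X_pow {R : Type*} [CommSemiring R] [Fintype V] {s : Set V} [Fintype s]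
    [DecidablePred (· ∈ s)] (e : s → ℕ) :
    rename Subtype.val (∏ u, X u ^ e u : MvPolynomial s R) =
      ∏ x, X x ^ (if h : x ∈ s then e ⟨x, h⟩ else 0) := by
  calc _ = ∏ x, if h : x ∈ s then (X x : MvPolynomial V R) ^ e ⟨x, h⟩ else 1 := by
        rw [Fintype.prod_dite]
        simp only [map_prod, map_pow, rename_X, prod_const_one, mul_one]
        congr!
    _ = _ := prod_congr rfl fun x _ => by split_ifs <;> simp

section TreePolynomial

open scoped Classical

variable [Fintype V] [DecidableEq V]

noncomputable def spanningTrees (G : SimpleGraph V) : Finset (SimpleGraph V) :=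
  univ.filter fun T => T ≤ G ∧ T.IsTree

noncomputable def treeTerm (w : Sym2 V → ℝ) (T : SimpleGraph V) : MvPolynomial V ℝ :=
  C (∏ e ∈ T.edgeFinset, w e) * ∏ x, X x ^ (T.degree x - 1)

lemma mem_spanningTrees {G T : SimpleGraph V} : T ∈ spanningTrees G ↔ T ≤ G ∧ T.IsTree := by
  simp [spanningTrees]

lemma treePoly_eq_sum (G : SimpleGraph V) (w : Sym2 V → ℝ) :
    treePoly G w = ∑ T ∈ spanningTrees G, treeTerm w T :=
  rfl

variable {G H T : SimpleGraph V}

namespace SimpleGraph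

lemma glue_mem_spanningTrees (hP : IsPartitionCompl Vs v) {g : ∀ i, SimpleGraph ↥(Vs i ∪ {v})}
    (hg : ∀ i, g i ∈ spanningTrees (G.induce (Vs i ∪ {v}))) :
    glue v Vs g ∈ spanningTrees G := by
  simp only [mem_spanningTrees] at hg ⊢
  refine ⟨glue_le fun i => (hg i).1, ((noCrossEdges_glue hP).isTree_iff hP).2 fun i => ?_⟩
  rw [glue_induce hP]
  exact (hg i).2

namespace NoCrossEdges

lemma induce_mem_spanningTrees (hP : IsPartitionCompl Vs v) (hG : G.NoCrossEdges Vs)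
    (hT : T ∈ spanningTrees G) (i : ι) :
    T.induce (Vs i ∪ {v}) ∈ spanningTrees (G.induce (Vs i ∪ {v})) := by
  rw [mem_spanningTrees] at hT ⊢
  exact ⟨fun _ _ h => hT.1 h, ((hG.anti hT.1).isTree_iff hP).1 hT.2 i⟩

variable [Fintype ι]

lemma degree_sub_one_eq (hP : IsPartitionCompl Vs v) (hH : H.NoCrossEdges Vs)
    (hpos : ∀ i, 0 < (H.induce (Vs i ∪ {v})).degree ⟨v, by simp⟩) (x : V) :
    H.degree x - 1 = (if x = v then Fintype.card ι - 1 else 0) +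
      ∑ i, if h : x ∈ Vs i ∪ {v} then (H.induce (Vs i ∪ {v})).degree ⟨x, h⟩ - 1
        else 0 := by
  by_cases hx : x = v
  · subst x
    have hsum : ∑ i, (H.induce (Vs i ∪ {v})).degree ⟨v, by simp⟩ =
        ∑ i, ((H.induce (Vs i ∪ {v})).degree ⟨v, by simp⟩ - 1) + Fintype.card ι := by
      rw [← card_univ, card_eq_sum_ones, ← sum_add_distrib]
      exact sum_congr rfl fun i _ => (Nat.sub_add_cancel (hpos i)).symm
    simp only [↓reduceIte, Set.mem_union, Set.mem_singleton_iff, or_true, ↓reduceDIte,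
      hH.degree_eq_sum hP]
    rcases isEmpty_or_nonempty ι with hι | hι
    · simp
    · have := Fintype.card_pos (α := ι)
      omega
  · obtain ⟨j, hxj⟩ := hP.exists_mem hx
    rw [if_neg hx, zero_add, sum_eq_single j, dif_pos (Set.mem_union_left _ hxj),
      hH.degree_induce_of_mem hP hxj]
    · exact fun i _ hij => dif_neg fun hxi => hij (hP.eq_of_mem (hxi.resolve_right hx) hxj)
    · simp

lemma prod_X_pow_degree (hP : IsPartitionCompl Vs v) (hH : H.NoCrossEdges Vs)
    (hpos : ∀ i, 0 < (H.induce (Vs i ∪ {v})).degree ⟨v, by simp⟩) :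
    ∏ x, (X x : MvPolynomial V ℝ) ^ (H.degree x - 1) =
      X v ^ (Fintype.card ι - 1) *
        ∏ i, rename Subtype.val (∏ u, X u ^ ((H.induce (Vs i ∪ {v})).degree u - 1)) := by
  have hv : (X v : MvPolynomial V ℝ) ^ (Fintype.card ι - 1) =
      ∏ x, X x ^ (if x = v then Fintype.card ι - 1 else 0) := by
    rw [Fintype.prod_eq_single v fun x hx => by simp [hx], if_pos rfl]
  simp only [rename_val_prod_X_pow, hv]
  rw [prod_comm, ← prod_mul_distrib]
  simp only [prod_pow_eq_pow_sum, ← pow_add, ← hH.degree_sub_one_eq hP hpos]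

lemma treeTerm_eq (hP : IsPartitionCompl Vs v) (hH : H.NoCrossEdges Vs)
    (hpos : ∀ i, 0 < (H.induce (Vs i ∪ {v})).degree ⟨v, by simp⟩) (w : Sym2 V → ℝ) :
    treeTerm w H = X v ^ (Fintype.card ι - 1) *
      ∏ i, rename Subtype.val
        (treeTerm (fun e => w (e.map Subtype.val)) (H.induce (Vs i ∪ {v}))) := by
  simp only [treeTerm, map_mul, rename_C, prod_mul_distrib, ← map_prod C]
  rw [hH.prod_edgeFinset hP, hH.prod_X_pow_degree hP hpos, mul_left_comm]
  -- the two sides infer decidability of adjacency in `H.induce (Vs i ∪ {v})` differently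
  rfl

lemma treeTerm_eq_of_mem_spanningTrees (hP : IsPartitionCompl Vs v) (hG : G.NoCrossEdges Vs)
    (hne : ∀ i, (Vs i).Nonempty) (hT : T ∈ spanningTrees G) (w : Sym2 V → ℝ) :
    treeTerm w T = X v ^ (Fintype.card ι - 1) *
      ∏ i, rename Subtype.val
        (treeTerm (fun e => w (e.map Subtype.val)) (T.induce (Vs i ∪ {v}))) := by
  refine (hG.anti (mem_spanningTrees.1 hT).1).treeTerm_eq hP (fun i => ?_) w
  obtain ⟨a, ha⟩ := hne i
  exact Reachable.degree_pos_left (v := ⟨a, Set.mem_union_left _ ha⟩)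
    (fun h => hP.ne_of_mem ha (congrArg Subtype.val h).symm)
    ((hG.induce_mem_spanningTrees hP hT i |> mem_spanningTrees.1).2.connected.preconnected _ _)

end NoCrossEdges

end SimpleGraph

end TreePolynomial

end

open scoped Classical in
theorem stmt_11_general {V : Type*} [Fintype V] [DecidableEq V] (G : SimpleGraph V)
    (w : Sym2 V → ℝ) (v : V) (k : ℕ) (Vs : Fin k → Set V)
    (hne : ∀ i, (Vs i).Nonempty)
    (hdisj : ∀ i j, i ≠ j → Disjoint (Vs i) (Vs j))
    (hcover : (⋃ i, Vs i) = {v}ᶜ)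
    (hsep : ∀ i j, i ≠ j → ∀ a ∈ Vs i, ∀ b ∈ Vs j, ¬ G.Adj a b) :
    treePoly G w =
      MvPolynomial.X v ^ (k - 1) *
        ∏ i, MvPolynomial.rename (Subtype.val : ↥(Vs i ∪ {v}) → V)
          (treePoly (G.induce (Vs i ∪ {v}))
            (fun e => w (e.map Subtype.val))) := by
  have hP : IsPartitionCompl Vs v := ⟨fun i j => hdisj i j, hcover⟩
  have hG : G.NoCrossEdges Vs := hsep
  simp only [treePoly_eq_sum, map_sum]
  rw [Finset.prod_univ_sum, Finset.mul_sum]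
  refine Finset.sum_nbij' (fun T i => T.induce (Vs i ∪ {v})) (SimpleGraph.glue v Vs)
    (fun T hT => Fintype.mem_piFinset.2 (hG.induce_mem_spanningTrees hP hT))
    (fun g hg => SimpleGraph.glue_mem_spanningTrees hP (Fintype.mem_piFinset.1 hg))
    (fun T hT => (hG.anti (mem_spanningTrees.1 hT).1).glue_induce_eq hP)
    (fun g _ => funext fun i => SimpleGraph.glue_induce hP i) fun T hT => ?_
  simpa using hG.treeTerm_eq_of_mem_spanningTrees hP hne hT w

open scoped Classical in
/-- Cut-vertex factorization of the weighted vertex spanning-tree polynomial: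
if removing the vertex `v` from the connected weighted graph `G` leaves the
connected components `V₁, …, V_k` (here `Vs 0, …, Vs (k-1)`), and `Gᵢ` is the
subgraph induced on `Vᵢ ∪ {v}`, then
`P_{G,w} = x_v^{k−1} · Π_i P_{Gᵢ,w}`. -/
theorem stmt_11 {V : Type*} [Fintype V] [DecidableEq V] (G : SimpleGraph V)
    (hG : G.Connected) (w : Sym2 V → ℝ) (v : V) (k : ℕ) (Vs : Fin k → Set V)
    (hne : ∀ i, (Vs i).Nonempty)
    (hdisj : ∀ i j, i ≠ j → Disjoint (Vs i) (Vs j))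
    (hcover : (⋃ i, Vs i) = {v}ᶜ)
    (hconn : ∀ i, (G.induce (Vs i)).Connected)
    (hsep : ∀ i j, i ≠ j → ∀ a ∈ Vs i, ∀ b ∈ Vs j, ¬ G.Adj a b) :
    treePoly G w =
      MvPolynomial.X v ^ (k - 1) *
        ∏ i, MvPolynomial.rename (Subtype.val : ↥(Vs i ∪ {v}) → V)
          (treePoly (G.induce (Vs i ∪ {v}))
            (fun e => w (e.map Subtype.val))) :=
  stmt_11_general G w v k Vs hne hdisj hcover hsep
end

section
/- Let G be a weighted graph covered by two induced subgraphs G₁ and G₂ (every vertex of G lies in G₁ or G₂), and suppose x₁, x₂, y are three vertices belonging to both G₁ and G₂, with edges x₁y and x₂y present in G. If the pair {x₁, x₂} is contractible (true twin with proportional weights) both in G₁ and in G₂, then {x₁, x₂} is contractible in G. -/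
/-- In a weighted graph `(G,w)`, a pair of vertices `x₁, x₂` is *contractible*
if `N(x₁)∖{x₂} = N(x₂)∖{x₁}` and the ratio `w(vx₁)/w(vx₂)` is the same for
all vertices `v` adjacent to both `x₁` and `x₂`. -/
def Contractible {V : Type*} (G : SimpleGraph V) (w : Sym2 V → ℝ)
    (x₁ x₂ : V) : Prop :=
  (G.neighborSet x₁ \ {x₂} = G.neighborSet x₂ \ {x₁}) ∧
  ∀ v v' : V, G.Adj v x₁ → G.Adj v x₂ → G.Adj v' x₁ → G.Adj v' x₂ →
    w s(v, x₁) / w s(v, x₂) = w s(v', x₁) / w s(v', x₂)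

/-- If a weighted graph `G` is covered by two induced subgraphs `G₁ = G[S₁]`
and `G₂ = G[S₂]`, and `x₁, x₂, y` are vertices of both with edges `x₁y` and
`x₂y` in `G`, and the pair `{x₁,x₂}` is contractible both in `G₁` and in `G₂`,
then `{x₁,x₂}` is contractible in `G`. -/
theorem stmt_16 {V : Type*} (G : SimpleGraph V) (w : Sym2 V → ℝ)
    (S₁ S₂ : Set V) (hcover : S₁ ∪ S₂ = Set.univ)
    (x₁ x₂ y : V)
    (hx₁1 : x₁ ∈ S₁) (hx₁2 : x₁ ∈ S₂) (hx₂1 : x₂ ∈ S₁) (hx₂2 : x₂ ∈ S₂)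
    (hy1 : y ∈ S₁) (hy2 : y ∈ S₂)
    (hadj₁ : G.Adj x₁ y) (hadj₂ : G.Adj x₂ y)
    (hc₁ : Contractible (G.induce S₁) (fun e => w (e.map Subtype.val))
      ⟨x₁, hx₁1⟩ ⟨x₂, hx₂1⟩)
    (hc₂ : Contractible (G.induce S₂) (fun e => w (e.map Subtype.val))
      ⟨x₁, hx₁2⟩ ⟨x₂, hx₂2⟩) :
    Contractible G w x₁ x₂ := by
  obtain ⟨hN₁, hR₁⟩ := hc₁
  obtain ⟨hN₂, hR₂⟩ := hc₂
  have hmem : ∀ v : V, v ∈ S₁ ∨ v ∈ S₂ := by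
    intro v
    have : v ∈ S₁ ∪ S₂ := by rw [hcover]; trivial
    exact this
  -- neighbor set part
  have key : ∀ v : V, G.Adj x₁ v → v ≠ x₂ → G.Adj x₂ v := by
    intro v hv hne
    rcases hmem v with h | h
    · have : (⟨v, h⟩ : S₁) ∈ (G.induce S₁).neighborSet ⟨x₁, hx₁1⟩ \ {⟨x₂, hx₂1⟩} := by
        refine ⟨hv, ?_⟩
        simp [Subtype.ext_iff, hne]
      rw [hN₁] at this
      exact this.1
    · have : (⟨v, h⟩ : S₂) ∈ (G.induce S₂).neighborSet ⟨x₁, hx₁2⟩ \ {⟨x₂, hx₂2⟩} := by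
        refine ⟨hv, ?_⟩
        simp [Subtype.ext_iff, hne]
      rw [hN₂] at this
      exact this.1
  have key' : ∀ v : V, G.Adj x₂ v → v ≠ x₁ → G.Adj x₁ v := by
    intro v hv hne
    rcases hmem v with h | h
    · have : (⟨v, h⟩ : S₁) ∈ (G.induce S₁).neighborSet ⟨x₂, hx₂1⟩ \ {⟨x₁, hx₁1⟩} := by
        refine ⟨hv, ?_⟩
        simp [Subtype.ext_iff, hne]
      rw [← hN₁] at this
      exact this.1
    · have : (⟨v, h⟩ : S₂) ∈ (G.induce S₂).neighborSet ⟨x₂, hx₂2⟩ \ {⟨x₁, hx₁2⟩} := by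
        refine ⟨hv, ?_⟩
        simp [Subtype.ext_iff, hne]
      rw [← hN₂] at this
      exact this.1
  constructor
  · ext v
    constructor
    · rintro ⟨hadj, hv⟩
      exact ⟨key v hadj (by simpa using hv), by
        rintro rfl; exact G.irrefl hadj⟩
    · rintro ⟨hadj, hv⟩
      exact ⟨key' v hadj (by simpa using hv), by
        rintro rfl; exact G.irrefl hadj⟩
  · -- ratio part: compare with y
    have hyx₁ : G.Adj y x₁ := hadj₁.symm
    have hyx₂ : G.Adj y x₂ := hadj₂.symm
    have hy' : ∀ v : V, G.Adj v x₁ → G.Adj v x₂ →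
        w s(v, x₁) / w s(v, x₂) = w s(y, x₁) / w s(y, x₂) := by
      intro v hv1 hv2
      rcases hmem v with h | h
      · exact hR₁ ⟨v, h⟩ ⟨y, hy1⟩ hv1 hv2 hyx₁ hyx₂
      · exact hR₂ ⟨v, h⟩ ⟨y, hy2⟩ hv1 hv2 hyx₁ hyx₂
    intro v v' hv1 hv2 hv1' hv2'
    rw [hy' v hv1 hv2, hy' v' hv1' hv2']
end

section
/- Suppose a, b, c are positive real numbers with a ≠ 1 and b ≠ 1 such that each of the following multisets contains two equal elements: {a,c,1}, {b,c,1}, {a,b,c}, {1,ab,c}, {c,a,ab}, {c,b,ab}. Then a contradiction follows; that is, no such a, b, c exist. -/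
/-- No positive reals `a, b, c` with `a ≠ 1`, `b ≠ 1` satisfy that each of the
multisets `{a,c,1}`, `{b,c,1}`, `{a,b,c}`, `{1,ab,c}`, `{c,a,ab}`, `{c,b,ab}`
contains two equal elements. -/
theorem stmt_17 (a b c : ℝ) (ha : 0 < a) (hb : 0 < b) (hc : 0 < c)
    (ha1 : a ≠ 1) (hb1 : b ≠ 1)
    (h1 : a = c ∨ a = 1 ∨ c = 1)
    (h2 : b = c ∨ b = 1 ∨ c = 1)
    (h3 : a = b ∨ a = c ∨ b = c)
    (h4 : 1 = a * b ∨ 1 = c ∨ a * b = c)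
    (h5 : c = a ∨ c = a * b ∨ a = a * b)
    (h6 : c = b ∨ c = a * b ∨ b = a * b) :
    False := by
  by_cases hc1 : c = 1
  · subst hc1
    have hab : a = b := by tauto
    subst hab
    rcases h5 with h5 | h5 | h5
    · exact ha1 h5.symm
    · -- 1 = a * a
      rcases ha1.lt_or_gt with h | h
      · nlinarith
      · nlinarith
    · -- a = a * a → a = 1
      have : a = 1 := by nlinarith [sq_nonneg (a-1)]
      exact ha1 this
  · have hac : a = c := by rcases h1 with h|h|h; exacts [h, absurd h ha1, absurd h hc1]
    have hbc : b = c := by rcases h2 with h|h|h; exacts [h, absurd h hb1, absurd h hc1]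
    have hab : a = b := hac.trans hbc.symm
    rcases h4 with h4 | h4 | h4
    · rcases ha1.lt_or_gt with h | h <;> nlinarith [hab, h4]
    · exact hc1 h4.symm
    · exact ha1 (by nlinarith [hab, hac, h4, sq_nonneg (a-1)])
end
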